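/- arXiv:1803.10448 — 2 statements merged into one kernel-verified Lean document; each statement's English description precedes it below -/
import Mathlib

section
/- Let X ⊆ ℝⁿ be a nonempty closed convex set, x ∈ X, and v ∈ ℝⁿ. Then the directional projection Π_X(x,v) := lim_{ε→0⁺} (proj_X(x+εv) − x)/ε equals the projection of v onto the tangent cone of X at x. -/
open scoped RealInnerProductSpace

/-- `p` is a metric projection of `v` onto `S`. -/
def IsProjOn {n : ℕ} (S : Set (EuclideanSpace ℝ (Fin n)))
    (v p : EuclideanSpace ℝ (Fin n)) : Prop :=
  p ∈ S ∧ ∀ y ∈ S, ‖v - p‖ ≤ ‖v - y‖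

/-- Normal cone of `X` at `x`. -/
def NCone {n : ℕ} (X : Set (EuclideanSpace ℝ (Fin n))) (x : EuclideanSpace ℝ (Fin n)) :
    Set (EuclideanSpace ℝ (Fin n)) :=
  {w | ∀ z ∈ X, ⟪w, z - x⟫ ≤ 0}

/-- Tangent cone of `X` at `x`, defined as the polar of the normal cone. -/
def TCone {n : ℕ} (X : Set (EuclideanSpace ℝ (Fin n))) (x : EuclideanSpace ℝ (Fin n)) :
    Set (EuclideanSpace ℝ (Fin n)) :=
  {v | ∀ w ∈ NCone X x, ⟪w, v⟫ ≤ 0}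


/-!
Write `q ε = ε⁻¹ • (proj_X (x + ε • v) - x)`. Rescaling the variational inequality of `proj_X`
gives `⟪v - q ε, w - x⟫ ≤ ε * ⟪v - q ε, q ε⟫ ≤ ε * ‖v‖ ^ 2 / 4` for `w ∈ X`, and `w = x` gives
`0 ≤ ⟪v - q ε, q ε⟫`, whence `‖q ε‖ ≤ ‖v‖`; moreover `q ε ∈ T_X(x)`. Hence every cluster point `q`
of `q ε` as `ε → 0⁺` lies in `T_X(x)`, has `v - q ∈ N_X(x)` and `0 ≤ ⟪v - q, q⟫`. Since `T_X(x)` is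
the polar of `N_X(x)`, this is the variational inequality characterizing the projection of `v`
onto `T_X(x)`, so `q` is that projection. The quotients stay in a compact ball, and a net in a
compact set with a unique cluster point converges to it.
-/

open Filter Topology

section InnerProductSpace

variable {E : Type*} [NormedAddCommGroup E] [InnerProductSpace ℝ E]

lemma eq_of_forall_real_inner_sub_nonpos {S : Set E} {v p p' : E} (hp : p ∈ S) (hp' : p' ∈ S)
    (h : ∀ y ∈ S, ⟪v - p, y - p⟫ ≤ 0) (h' : ∀ y ∈ S, ⟪v - p', y - p'⟫ ≤ 0) : p = p' := by
  have hsq : ‖p' - p‖ ^ 2 = ⟪v - p, p' - p⟫ + ⟪v - p', p - p'⟫ := by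
    rw [← real_inner_self_eq_norm_sq, ← neg_sub p' p, inner_neg_right, ← sub_eq_add_neg,
      ← inner_sub_left, sub_sub_sub_cancel_left]
  have : ‖p' - p‖ ^ 2 ≤ 0 := hsq ▸ add_nonpos (h p' hp') (h' p hp)
  simpa [sub_eq_zero, eq_comm] using this

lemma norm_le_of_real_inner_sub_nonneg {v q : E} (h : 0 ≤ ⟪v - q, q⟫) : ‖q‖ ≤ ‖v‖ := by
  rw [inner_sub_left, real_inner_self_eq_norm_sq] at h
  nlinarith [real_inner_le_norm v q, norm_nonneg q, norm_nonneg v]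

lemma real_inner_sub_le_sq_div_four (v q : E) : ⟪v - q, q⟫ ≤ ‖v‖ ^ 2 / 4 := by
  rw [inner_sub_left, real_inner_self_eq_norm_sq]
  nlinarith [real_inner_le_norm v q, sq_nonneg (‖v‖ - 2 * ‖q‖)]

end InnerProductSpace

lemma MapClusterPt.apply_nonpos_of_eventually_le {α X : Type*} [TopologicalSpace X]
    {l : Filter α} {f : α → X} {x₀ : X} (hx₀ : MapClusterPt x₀ l f) {g : X → ℝ}
    (hg : Continuous g) {c : α → ℝ} (hc : Tendsto c l (𝓝 0))
    (hle : ∀ᶠ a in l, g (f a) ≤ c a) : g x₀ ≤ 0 := by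
  refine le_of_forall_pos_le_add fun δ hδ => ?_
  have hsmall : ∀ᶠ a in l, c a ≤ δ := hc.eventually (ge_mem_nhds (by simpa using hδ))
  refine (isClosed_le hg continuous_const).mem_of_mapClusterPt hx₀ ?_
  filter_upwards [hle, hsmall] with a h1 h2
  simpa using h1.trans h2

section Euclidean

variable {n : ℕ}

lemma IsProjOn.real_inner_sub_nonpos {S : Set (EuclideanSpace ℝ (Fin n))} (hS : Convex ℝ S)
    {v p : EuclideanSpace ℝ (Fin n)} (h : IsProjOn S v p) :
    ∀ y ∈ S, ⟪v - p, y - p⟫ ≤ 0 := by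
  have : Nonempty S := ⟨⟨p, h.1⟩⟩
  have hbdd : BddBelow (Set.range fun w : S => ‖v - w‖) :=
    ⟨0, by rintro _ ⟨w, rfl⟩; positivity⟩
  refine (norm_eq_iInf_iff_real_inner_le_zero hS h.1).1 ?_
  exact le_antisymm (le_ciInf fun w => h.2 w w.2) (ciInf_le hbdd ⟨p, h.1⟩)

variable {X : Set (EuclideanSpace ℝ (Fin n))} {x : EuclideanSpace ℝ (Fin n)}

lemma tCone_eq_biInter :
    TCone X x = ⋂ w ∈ NCone X x, {u | ⟪w, u⟫ ≤ 0} := by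
  ext u; simp [TCone]

lemma isClosed_tCone : IsClosed (TCone X x) :=
  tCone_eq_biInter ▸ isClosed_biInter fun w _ => isClosed_le (by fun_prop) continuous_const

lemma convex_tCone : Convex ℝ (TCone X x) :=
  tCone_eq_biInter ▸ convex_iInter₂ fun w _ =>
    convex_halfSpace_le (innerₛₗ ℝ w).isLinear 0

lemma smul_sub_mem_tCone {c : ℝ} (hc : 0 ≤ c) {z : EuclideanSpace ℝ (Fin n)} (hz : z ∈ X) :
    c • (z - x) ∈ TCone X x := fun w hw => by
  rw [real_inner_smul_right]
  exact mul_nonpos_of_nonneg_of_nonpos hc (hw z hz)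

/-- As `T` is the polar of `N`, the hypotheses on `q` give the variational inequality of the
projection of `v` onto `T`. -/
lemma eq_of_isProjOn_tCone {v q pT : EuclideanSpace ℝ (Fin n)}
    (hpT : IsProjOn (TCone X x) v pT) (hqT : q ∈ TCone X x) (hqN : v - q ∈ NCone X x)
    (hq : 0 ≤ ⟪v - q, q⟫) : q = pT := by
  refine eq_of_forall_real_inner_sub_nonpos hqT hpT.1 (fun u hu => ?_)
    (hpT.real_inner_sub_nonpos convex_tCone)
  rw [inner_sub_right]
  linarith [hu _ hqN]

variable {v p : EuclideanSpace ℝ (Fin n)} {ε : ℝ}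

/-- The variational inequality of `p`, written in terms of `q = ε⁻¹ • (p - x)` and divided
by `ε`. -/
lemma IsProjOn.real_inner_sub_le_mul (hconv : Convex ℝ X) (hε : 0 < ε)
    (hp : IsProjOn X (x + ε • v) p) (w : EuclideanSpace ℝ (Fin n)) (hw : w ∈ X) :
    ⟪v - ε⁻¹ • (p - x), w - x⟫ ≤ ε * ⟪v - ε⁻¹ • (p - x), ε⁻¹ • (p - x)⟫ := by
  set q := ε⁻¹ • (p - x)
  have hpq : p = x + ε • q := by rw [smul_inv_smul₀ hε.ne']; abel
  have hVI := hp.real_inner_sub_nonpos hconv w hw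
  rw [hpq, show x + ε • v - (x + ε • q) = ε • (v - q) by rw [smul_sub]; abel,
    show w - (x + ε • q) = (w - x) - ε • q by abel, real_inner_smul_left, inner_sub_right,
    real_inner_smul_right] at hVI
  nlinarith [(mul_nonpos_iff_pos_imp_nonpos.1 hVI).1 hε]

lemma IsProjOn.real_inner_sub_nonneg (hconv : Convex ℝ X) (hx : x ∈ X) (hε : 0 < ε)
    (hp : IsProjOn X (x + ε • v) p) :
    0 ≤ ⟪v - ε⁻¹ • (p - x), ε⁻¹ • (p - x)⟫ := by
  have := hp.real_inner_sub_le_mul hconv hε x hx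
  rw [sub_self, inner_zero_right] at this
  exact nonneg_of_mul_nonneg_right this hε

end Euclidean

theorem stmt1_general {n : ℕ} (X : Set (EuclideanSpace ℝ (Fin n))) (hconv : Convex ℝ X)
    (x : EuclideanSpace ℝ (Fin n)) (hx : x ∈ X) (v : EuclideanSpace ℝ (Fin n))
    (P : EuclideanSpace ℝ (Fin n) → EuclideanSpace ℝ (Fin n))
    (hP : ∀ u, IsProjOn X u (P u))
    (pT : EuclideanSpace ℝ (Fin n)) (hpT : IsProjOn (TCone X x) v pT) :
    Filter.Tendsto (fun ε : ℝ => ε⁻¹ • (P (x + ε • v) - x))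
      (nhdsWithin 0 (Set.Ioi 0)) (nhds pT) := by
  set q := fun ε : ℝ => ε⁻¹ • (P (x + ε • v) - x)
  have hpos : ∀ᶠ ε in 𝓝[>] (0 : ℝ), 0 < ε := self_mem_nhdsWithin
  have hnonneg : ∀ᶠ ε in 𝓝[>] 0, 0 ≤ ⟪v - q ε, q ε⟫ :=
    hpos.mono fun ε hε => (hP _).real_inner_sub_nonneg hconv hx hε
  refine (isCompact_closedBall 0 ‖v‖).tendsto_nhds_of_unique_mapClusterPt ?_
    fun q₀ _ hq₀ => eq_of_isProjOn_tCone hpT ?_ (fun w hw => ?_) ?_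
  · filter_upwards [hnonneg] with ε h
    simpa using norm_le_of_real_inner_sub_nonneg h
  · refine isClosed_tCone.mem_of_mapClusterPt hq₀ ?_
    filter_upwards [hpos] with ε hε
    exact smul_sub_mem_tCone (inv_nonneg.2 hε.le) (hP _).1
  · have hc : Tendsto (fun ε : ℝ => ε * (‖v‖ ^ 2 / 4)) (𝓝[>] 0) (𝓝 0) :=
      tendsto_nhdsWithin_of_tendsto_nhds <| by
        simpa using (continuous_mul_const (‖v‖ ^ 2 / 4)).tendsto (0 : ℝ)
    refine hq₀.apply_nonpos_of_eventually_le (g := fun u => ⟪v - u, w - x⟫) (by fun_prop) hc ?_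
    filter_upwards [hpos] with ε hε
    exact ((hP _).real_inner_sub_le_mul hconv hε w hw).trans
      (mul_le_mul_of_nonneg_left (real_inner_sub_le_sq_div_four _ _) hε.le)
  · exact (isClosed_le continuous_const (by fun_prop)).mem_of_mapClusterPt
      (s := {u | 0 ≤ ⟪v - u, u⟫}) hq₀ hnonneg

/-- The directional projection `Π_X(x,v) = lim_{ε→0⁺} (proj_X(x+εv) − x)/ε` equals the
projection of `v` onto the tangent cone of `X` at `x`. -/
theorem stmt1 {n : ℕ} (X : Set (EuclideanSpace ℝ (Fin n)))
    (hne : X.Nonempty) (hcl : IsClosed X) (hconv : Convex ℝ X)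
    (x : EuclideanSpace ℝ (Fin n)) (hx : x ∈ X) (v : EuclideanSpace ℝ (Fin n))
    (P : EuclideanSpace ℝ (Fin n) → EuclideanSpace ℝ (Fin n))
    (hP : ∀ u, IsProjOn X u (P u))
    (pT : EuclideanSpace ℝ (Fin n)) (hpT : IsProjOn (TCone X x) v pT) :
    Filter.Tendsto (fun ε : ℝ => ε⁻¹ • (P (x + ε • v) - x))
      (nhdsWithin 0 (Set.Ioi 0)) (nhds pT) :=
  stmt1_general X hconv x hx v P hP pT hpT
end

section
/- Let f¹,…,fᴺ: ℝⁿ → ℝ be differentiable with ℓ-strongly monotone gradients on convex sets Xⁱ (i.e., (x−y)·(∇fⁱ(x)−∇fⁱ(y)) ≥ ℓ‖x−y‖² for x,y ∈ Xⁱ), and let C ∈ ℝ^{n×n}. Define F(x) := (∇f¹(x¹)+C·avg(x), …, ∇fᴺ(xᴺ)+C·avg(x)) on ∏ᵢXⁱ, where avg(x) = (1/N)∑ⱼxʲ. If ℓ + (1/2)λ_min(C + Cᵀ) > 0, then F is strictly monotone on ∏ᵢXⁱ: (x − y)·(F(x) − F(y)) > 0 whenever x ≠ y. -/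
/-!
Write `d = x - y`. The gradient part of `∑ᵢ ⟪dⁱ, F x i - F y i⟫` is at least `ℓ ∑ᵢ ‖dⁱ‖²` by
strong monotonicity, and the coupling part equals `N ⟪C a, a⟫` with `a = avg d`. Since averaging
is a projection, `N ‖a‖² ≤ ∑ᵢ ‖dⁱ‖²`, so the coupling part is at least
`(min λ 0 / 2) ∑ᵢ ‖dⁱ‖²`; the total is therefore at least `(ℓ + min λ 0 / 2) ∑ᵢ ‖dⁱ‖² > 0`.
-/

open scoped RealInnerProductSpace

noncomputable def avg {n N : ℕ} (x : Fin N → EuclideanSpace ℝ (Fin n)) :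
    EuclideanSpace ℝ (Fin n) :=
  (N : ℝ)⁻¹ • ∑ j, x j

open Finset

theorem norm_sum_sq_le_card_mul_sum_norm_sq {ι E : Type*} [SeminormedAddCommGroup E]
    (s : Finset ι) (v : ι → E) : ‖∑ i ∈ s, v i‖ ^ 2 ≤ #s * ∑ i ∈ s, ‖v i‖ ^ 2 :=
  (pow_le_pow_left₀ (norm_nonneg _) (norm_sum_le s v) 2).trans sq_sum_le_card_mul_sum_sq

section avg

variable {n N : ℕ}

theorem avg_sub (x y : Fin N → EuclideanSpace ℝ (Fin n)) : avg x - avg y = avg (x - y) := by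
  simp only [avg, Pi.sub_apply, sum_sub_distrib, smul_sub]

theorem card_smul_avg (x : Fin N → EuclideanSpace ℝ (Fin n)) : (N : ℝ) • avg x = ∑ j, x j := by
  rcases eq_or_ne N 0 with rfl | hN
  · simp
  · rw [avg, smul_smul, mul_inv_cancel₀ (Nat.cast_ne_zero.mpr hN), one_smul]

theorem card_mul_norm_avg_sq_le (x : Fin N → EuclideanSpace ℝ (Fin n)) :
    N * ‖avg x‖ ^ 2 ≤ ∑ i, ‖x i‖ ^ 2 := by
  rcases Nat.eq_zero_or_pos N with rfl | hN
  · simp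
  have hNpos : (0 : ℝ) < N := Nat.cast_pos.mpr hN
  have key : N * (N * ‖avg x‖ ^ 2) ≤ N * ∑ i, ‖x i‖ ^ 2 := by
    calc (N : ℝ) * (N * ‖avg x‖ ^ 2) = ‖(N : ℝ) • avg x‖ ^ 2 := by
          rw [norm_smul, Real.norm_of_nonneg hNpos.le]; ring
      _ = ‖∑ i, x i‖ ^ 2 := by rw [card_smul_avg]
      _ ≤ N * ∑ i, ‖x i‖ ^ 2 := by
          simpa using norm_sum_sq_le_card_mul_sum_norm_sq univ x
  exact le_of_mul_le_mul_left key hNpos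

theorem sum_inner_apply_avg (C : EuclideanSpace ℝ (Fin n) →L[ℝ] EuclideanSpace ℝ (Fin n))
    (x : Fin N → EuclideanSpace ℝ (Fin n)) :
    ∑ i, ⟪x i, C (avg x)⟫ = N * ⟪C (avg x), avg x⟫ := by
  rw [← sum_inner, ← card_smul_avg, real_inner_smul_left, real_inner_comm]

theorem min_mul_sum_norm_sq_le_sum_inner_apply_avg
    (C : EuclideanSpace ℝ (Fin n) →L[ℝ] EuclideanSpace ℝ (Fin n)) (lam : ℝ)
    (hlam : ∀ w : EuclideanSpace ℝ (Fin n), lam * ‖w‖ ^ 2 ≤ 2 * ⟪C w, w⟫)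
    (x : Fin N → EuclideanSpace ℝ (Fin n)) :
    min lam 0 / 2 * ∑ i, ‖x i‖ ^ 2 ≤ ∑ i, ⟪x i, C (avg x)⟫ := by
  have hproj := card_mul_norm_avg_sq_le x
  have hC : min lam 0 / 2 * ‖avg x‖ ^ 2 ≤ ⟪C (avg x), avg x⟫ := by
    nlinarith [hlam (avg x), min_le_left lam 0, sq_nonneg ‖avg x‖]
  have hN : (0 : ℝ) ≤ N := N.cast_nonneg
  rw [sum_inner_apply_avg]
  calc min lam 0 / 2 * ∑ i, ‖x i‖ ^ 2
      ≤ min lam 0 / 2 * (N * ‖avg x‖ ^ 2) :=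
        mul_le_mul_of_nonpos_left hproj (by linarith [min_le_right lam 0])
    _ = N * (min lam 0 / 2 * ‖avg x‖ ^ 2) := by ring
    _ ≤ N * ⟪C (avg x), avg x⟫ := mul_le_mul_of_nonneg_left hC hN

end avg

theorem sum_norm_sq_pos_of_ne {ι E : Type*} [Fintype ι] [NormedAddCommGroup E]
    {d : ι → E} (hd : d ≠ 0) : 0 < ∑ i, ‖d i‖ ^ 2 := by
  obtain ⟨i, hi⟩ := Function.ne_iff.mp hd
  exact sum_pos' (fun j _ => by positivity) ⟨i, mem_univ i, by positivity⟩

theorem stmt12_general {n N : ℕ}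
    (X : Fin N → Set (EuclideanSpace ℝ (Fin n)))
    (f : Fin N → EuclideanSpace ℝ (Fin n) → ℝ)
    (ℓ : ℝ) (hℓ : 0 < ℓ)
    (hmono : ∀ i, ∀ x ∈ X i, ∀ y ∈ X i,
      ℓ * ‖x - y‖ ^ 2 ≤ ⟪x - y, gradient (f i) x - gradient (f i) y⟫)
    (C : EuclideanSpace ℝ (Fin n) →L[ℝ] EuclideanSpace ℝ (Fin n))
    (lam : ℝ)
    (hlam : ∀ w : EuclideanSpace ℝ (Fin n), lam * ‖w‖ ^ 2 ≤ 2 * ⟪C w, w⟫)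
    (hcond : 0 < ℓ + (1 / 2) * lam)
    (F : (Fin N → EuclideanSpace ℝ (Fin n)) → Fin N → EuclideanSpace ℝ (Fin n))
    (hF : ∀ x i, F x i = gradient (f i) (x i) + C (avg x)) :
    ∀ x y : Fin N → EuclideanSpace ℝ (Fin n),
      (∀ i, x i ∈ X i) → (∀ i, y i ∈ X i) → x ≠ y →
        0 < ∑ i, ⟪x i - y i, F x i - F y i⟫ := by
  intro x y hx hy hxy
  set d := x - y
  have hsplit : ∑ i, ⟪d i, F x i - F y i⟫ =
      ∑ i, ⟪d i, gradient (f i) (x i) - gradient (f i) (y i)⟫ + ∑ i, ⟪d i, C (avg d)⟫ := by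
    rw [← sum_add_distrib]
    refine sum_congr rfl fun i _ => ?_
    rw [← inner_add_right, hF, hF, ← avg_sub, map_sub]
    abel_nf
  have hgrad : ℓ * ∑ i, ‖d i‖ ^ 2 ≤ ∑ i, ⟪d i, gradient (f i) (x i) - gradient (f i) (y i)⟫ := by
    rw [mul_sum]
    exact sum_le_sum fun i _ => hmono i (x i) (hx i) (y i) (hy i)
  have hcoupling := min_mul_sum_norm_sq_le_sum_inner_apply_avg C lam hlam d
  have hS := sum_norm_sq_pos_of_ne (sub_ne_zero.mpr hxy)
  have hrate : 0 < ℓ + min lam 0 / 2 := by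
    rcases min_choice lam 0 with h | h <;> rw [h] <;> linarith
  change 0 < ∑ i, ⟪d i, F x i - F y i⟫
  calc 0 < (ℓ + min lam 0 / 2) * ∑ i, ‖d i‖ ^ 2 := mul_pos hrate hS
    _ ≤ _ := by rw [hsplit]; linarith

/-- If the gradients `∇fⁱ` are `ℓ`-strongly monotone on `Xⁱ` and
`ℓ + (1/2)λ_min(C + Cᵀ) > 0`, then the pseudo-gradient mapping
`F(x) = (∇fⁱ(xⁱ) + C·avg(x))ᵢ` is strictly monotone on `∏ᵢXⁱ`. -/
theorem stmt12 {n N : ℕ}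
    (X : Fin N → Set (EuclideanSpace ℝ (Fin n))) (hcv : ∀ i, Convex ℝ (X i))
    (f : Fin N → EuclideanSpace ℝ (Fin n) → ℝ) (hfdiff : ∀ i, Differentiable ℝ (f i))
    (ℓ : ℝ) (hℓ : 0 < ℓ)
    (hmono : ∀ i, ∀ x ∈ X i, ∀ y ∈ X i,
      ℓ * ‖x - y‖ ^ 2 ≤ ⟪x - y, gradient (f i) x - gradient (f i) y⟫)
    (C : EuclideanSpace ℝ (Fin n) →L[ℝ] EuclideanSpace ℝ (Fin n))
    (lam : ℝ)
    (hlam : ∀ w : EuclideanSpace ℝ (Fin n), lam * ‖w‖ ^ 2 ≤ 2 * ⟪C w, w⟫)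
    (hcond : 0 < ℓ + (1 / 2) * lam)
    (F : (Fin N → EuclideanSpace ℝ (Fin n)) → Fin N → EuclideanSpace ℝ (Fin n))
    (hF : ∀ x i, F x i = gradient (f i) (x i) + C (avg x)) :
    ∀ x y : Fin N → EuclideanSpace ℝ (Fin n),
      (∀ i, x i ∈ X i) → (∀ i, y i ∈ X i) → x ≠ y →
        0 < ∑ i, ⟪x i - y i, F x i - F y i⟫ :=
  stmt12_general X f ℓ hℓ hmono C lam hlam hcond F hF
end
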